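/- In O(U_q(2)), for all m, n ∈ ℤ and t ∈ ℂ the identity (α − qⁿ t γ* uᵐ)(t α* uᵐ + q⁻ⁿ γ) = (t α* uᵐ + q^{−n+1} γ)(α − q^{n+1} t γ* uᵐ) holds. -/
import Mathlib


/-- in `O(U_q(2))`, for all `m, n ∈ ℤ` and `t ∈ ℂ`,
`(α − qⁿ t γ* uᵐ)(t α* uᵐ + q⁻ⁿ γ) = (t α* uᵐ + q^{1−n} γ)(α − q^{n+1} t γ* uᵐ)`. -/
theorem stmt18 (U : Type) [Ring U] [Algebra ℂ U] [StarRing U] [StarModule ℂ U]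
    (q : ℝ) (hq : 0 < q ∧ q < 1)
    (u : Uˣ) (α γ : U)
    (hu_central : ∀ x : U, (u : U) * x = x * (u : U))
    (hu_unitary : star (u : U) = ((u⁻¹ : Uˣ) : U))
    (h1 : α * γ = (q : ℂ) • (γ * α))
    (h2 : α * star γ = (q : ℂ) • (star γ * α))
    (h3 : γ * star γ = star γ * γ)
    (h4 : star α * α + γ * star γ = 1)
    (h5 : α * star α + ((q : ℂ)^2) • (γ * star γ) = 1) :
    ∀ (m n : ℤ) (t : ℂ),
      (α - ((q : ℂ)^n * t) • (star γ * ((u^m : Uˣ) : U))) *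
        (t • (star α * ((u^m : Uˣ) : U)) + ((q : ℂ)^(-n)) • γ) =
      (t • (star α * ((u^m : Uˣ) : U)) + ((q : ℂ)^(1-n)) • γ) *
        (α - ((q : ℂ)^(n+1) * t) • (star γ * ((u^m : Uˣ) : U))) := by
  obtain ⟨hq0, hq1⟩ := hq
  have hqC : (q : ℂ) ≠ 0 := by exact_mod_cast hq0.ne'
  have hαα' : α * star α = 1 - ((q:ℂ)^2) • (γ * star γ) := by
    rw [eq_sub_iff_add_eq]; exact h5
  have hα'α : star α * α = 1 - γ * star γ := by
    rw [eq_sub_iff_add_eq]; exact h4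
  have hsts : star γ * star α = (q:ℂ) • (star α * star γ) := by
    have := congrArg star h1
    simpa [star_smul, Complex.star_def, Complex.conj_ofReal] using this
  intro m n t
  set v : U := ((u ^ m : Uˣ) : U) with hvdef
  have hv : ∀ x : U, v * x = x * v := by
    intro x
    have hc : Commute (u : U) x := hu_central x
    have : Commute v x := by
      cases m with
      | ofNat k =>
          simpa [hvdef, zpow_natCast, Units.val_pow_eq_pow_val] using hc.pow_left k
      | negSucc k =>
          have h1' : Commute ((u ^ (k+1) : Uˣ) : U) x := by
            simpa [Units.val_pow_eq_pow_val] using hc.pow_left (k+1)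
          simpa [hvdef, zpow_negSucc] using h1'.units_inv_left
    exact this
  have P1 : α * (star α * v) = v - ((q:ℂ)^2) • (γ * (star γ * v)) := by
    rw [← mul_assoc, hαα', sub_mul, one_mul, smul_mul_assoc, mul_assoc]
  have P3 : star γ * (v * (star α * v)) = (q:ℂ) • (star α * (star γ * (v * v))) := by
    calc star γ * (v * (star α * v)) = star γ * ((v * star α) * v) := by
          rw [mul_assoc]
      _ = star γ * ((star α * v) * v) := by rw [hv (star α)]
      _ = (star γ * star α) * (v * v) := by noncomm_ring
      _ = (q:ℂ) • (star α * (star γ * (v * v))) := by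
          rw [hsts, smul_mul_assoc, mul_assoc]
  have P4 : star γ * (v * γ) = γ * (star γ * v) := by
    calc star γ * (v * γ) = star γ * (γ * v) := by rw [hv γ]
      _ = (star γ * γ) * v := by rw [mul_assoc]
      _ = γ * (star γ * v) := by rw [← h3, mul_assoc]
  have P5 : star α * (v * α) = v - γ * (star γ * v) := by
    calc star α * (v * α) = star α * (α * v) := by rw [hv α]
      _ = (star α * α) * v := by rw [mul_assoc]
      _ = v - γ * (star γ * v) := by rw [hα'α, sub_mul, one_mul, mul_assoc]
  have P6 : star α * (v * (star γ * v)) = star α * (star γ * (v * v)) := by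
    calc star α * (v * (star γ * v)) = star α * ((v * star γ) * v) := by
          rw [mul_assoc]
      _ = star α * ((star γ * v) * v) := by rw [hv (star γ)]
      _ = star α * (star γ * (v * v)) := by rw [mul_assoc]
  simp only [sub_mul, mul_sub, add_mul, mul_add, smul_mul_assoc, mul_smul_comm,
    smul_smul, smul_sub, smul_add, mul_assoc]
  simp only [P1, P3, P4, P5, P6, h1]
  simp only [smul_sub, smul_smul, smul_add]
  have e4 : (q:ℂ)^(-n) * ((q:ℂ)^n * t) = t := by
    rw [← mul_assoc, ← zpow_add₀ hqC]; simp
  have e5 : (q:ℂ)^(n+1) * (t * (q:ℂ)^(1-n)) = (q:ℂ)^2 * t := by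
    rw [mul_comm t, ← mul_assoc, ← zpow_add₀ hqC, show n+1+(1-n) = 2 by ring]
    norm_cast
  have e6 : (q:ℂ)^(-n) * (q:ℂ) = (q:ℂ)^(1-n) := by
    rw [sub_eq_add_neg, add_comm, zpow_add₀ hqC, zpow_one]
  have e7 : (q:ℂ)^(n+1) * (t*t) = t * ((q:ℂ)^n * t) * (q:ℂ) := by
    rw [zpow_add₀ hqC, zpow_one]; ring
  simp only [e4, e5, e6, e7]
  match_scalars <;> ring
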